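/- arXiv:1701.02555 — 4 statements merged into one kernel-verified Lean document; each statement's English description precedes it below -/
import Mathlib

section
/- Let R and r be natural numbers with 1 ≤ r ≤ R, and let ζ ∈ ℤ² with ‖ζ‖₁ ≤ R. Then the number of lattice points u ∈ ℤ² satisfying both ‖u − ζ‖₁ ≤ r and ‖u‖₁ ≤ R is at least (r − 1)²/2. -/
/-- There is a lattice point `m` between `0` and `ζ` (in `ℓ¹`) at distance at most `r - s`
from `ζ` and with norm at most `R - s`. -/
lemma exists_center (R r s : ℤ) (hs : 0 ≤ s) (hsd : 2 * s ≤ r) (hrR : r ≤ R)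
    (a b : ℤ) (hab : |a| + |b| ≤ R) :
    ∃ m : ℤ × ℤ, |m.1 - a| + |m.2 - b| ≤ r - s ∧ |m.1| + |m.2| ≤ R - s := by
  rcases le_or_gt (|a| + |b|) (r - s) with h | h
  · refine ⟨(0, 0), ?_, ?_⟩ <;> simp only [Int.abs_eq_natAbs] at * <;> omega
  · rcases le_or_gt (r - s) |a| with h2 | h2
    · refine ⟨(if 0 ≤ a then a - (r - s) else a + (r - s), b), ?_, ?_⟩ <;>
        · simp only [Int.abs_eq_natAbs] at *
          split <;> omega
    · refine ⟨(0, if 0 ≤ b then b - (r - s - |a|) else b + (r - s - |a|)), ?_, ?_⟩ <;>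
        · simp only [Int.abs_eq_natAbs] at *
          split <;> omega

/-- If `1 ≤ r ≤ R` and `‖ζ‖₁ ≤ R`, then the number of lattice points `u ∈ ℤ²` with
`‖u − ζ‖₁ ≤ r` and `‖u‖₁ ≤ R` is at least `(r − 1)²/2`. -/
theorem ball_intersection_lower (R r : ℕ) (hr : 1 ≤ r) (hrR : r ≤ R)
    (ζ : ℤ × ℤ) (hζ : |ζ.1| + |ζ.2| ≤ (R : ℤ)) :
    ((r : ℝ) - 1) ^ 2 / 2 ≤
      (Set.ncard {u : ℤ × ℤ |
        |u.1 - ζ.1| + |u.2 - ζ.2| ≤ (r : ℤ) ∧ |u.1| + |u.2| ≤ (R : ℤ)} : ℝ) := by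
  classical
  set S : Set (ℤ × ℤ) := {u : ℤ × ℤ |
      |u.1 - ζ.1| + |u.2 - ζ.2| ≤ (r : ℤ) ∧ |u.1| + |u.2| ≤ (R : ℤ)} with hS
  set s : ℕ := r / 2 with hsdef
  have hs1 : 2 * (s : ℤ) ≤ (r : ℤ) := by omega
  have hs2 : (r : ℤ) ≤ 2 * s + 1 := by omega
  obtain ⟨m, hm1, hm2⟩ := exists_center R r s (by positivity) hs1 (by exact_mod_cast hrR)
    ζ.1 ζ.2 hζ
  -- two parity families inside the ℓ¹ ball of radius s around m
  set f : ℤ × ℤ → ℤ × ℤ := fun p => (m.1 + p.1 - p.2, m.2 + p.1 + p.2 - s) with hf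
  set g : ℤ × ℤ → ℤ × ℤ := fun p => (m.1 + p.1 - p.2, m.2 + p.1 + p.2 - s + 1) with hg
  set T : Finset (ℤ × ℤ) :=
      ((Finset.Icc (0:ℤ) s ×ˢ Finset.Icc (0:ℤ) s).image f) ∪
      ((Finset.Icc (0:ℤ) ((s:ℤ) - 1) ×ˢ Finset.Icc (0:ℤ) ((s:ℤ) - 1)).image g) with hT
  have hfin : S.Finite := by
    apply Set.Finite.subset ((Set.finite_Icc (-(R:ℤ)) R).prod (Set.finite_Icc (-(R:ℤ)) R))
    rintro ⟨u1, u2⟩ ⟨-, h2⟩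
    simp only [Set.mem_prod, Set.mem_Icc]
    constructor <;> constructor <;> simp only [Int.abs_eq_natAbs] at h2 <;> omega
  have hsub : (T : Set (ℤ × ℤ)) ⊆ S := by
    intro u hu
    simp only [hT, Finset.coe_union, Set.mem_union, Finset.coe_image, Set.mem_image,
      Finset.mem_coe, Finset.mem_product, Finset.mem_Icc] at hu
    have hm1' := hm1; have hm2' := hm2
    simp only [Int.abs_eq_natAbs] at hm1' hm2'
    rcases hu with ⟨⟨i, j⟩, ⟨⟨hi1, hi2⟩, hj1, hj2⟩, rfl⟩ | ⟨⟨i, j⟩, ⟨⟨hi1, hi2⟩, hj1, hj2⟩, rfl⟩ <;>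
      · constructor <;> simp only [hf, hg, Int.abs_eq_natAbs] <;> omega
  have hinjf : Function.Injective f := by
    rintro ⟨i, j⟩ ⟨i', j'⟩ h
    simp only [hf, Prod.mk.injEq] at h
    have h1 := h.1; have h2 := h.2
    rw [Prod.mk.injEq]; exact ⟨by omega, by omega⟩
  have hinjg : Function.Injective g := by
    rintro ⟨i, j⟩ ⟨i', j'⟩ h
    simp only [hg, Prod.mk.injEq] at h
    have h1 := h.1; have h2 := h.2
    rw [Prod.mk.injEq]; exact ⟨by omega, by omega⟩
  have hdisj : Disjoint ((Finset.Icc (0:ℤ) s ×ˢ Finset.Icc (0:ℤ) s).image f)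
      ((Finset.Icc (0:ℤ) ((s:ℤ) - 1) ×ˢ Finset.Icc (0:ℤ) ((s:ℤ) - 1)).image g) := by
    rw [Finset.disjoint_left]
    rintro u hu hu'
    simp only [Finset.mem_image, Finset.mem_product, Finset.mem_Icc] at hu hu'
    obtain ⟨⟨i, j⟩, -, rfl⟩ := hu
    obtain ⟨⟨i', j'⟩, -, h⟩ := hu'
    simp only [hf, hg, Prod.mk.injEq] at h
    omega
  have hcardT : T.card = (s + 1) ^ 2 + s ^ 2 := by
    rw [hT, Finset.card_union_of_disjoint hdisj,
      Finset.card_image_of_injective _ hinjf, Finset.card_image_of_injective _ hinjg,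
      Finset.card_product, Finset.card_product, Int.card_Icc, Int.card_Icc]
    have : ((s:ℤ) + 1 - 0).toNat = s + 1 := by omega
    have h2 : ((s:ℤ) - 1 + 1 - 0).toNat = s := by omega
    rw [this, h2]; ring
  have hle : ((s + 1) ^ 2 + s ^ 2 : ℕ) ≤ S.ncard := by
    calc ((s + 1) ^ 2 + s ^ 2 : ℕ) = T.card := hcardT.symm
    _ = (T : Set (ℤ × ℤ)).ncard := (Set.ncard_coe_finset T).symm
    _ ≤ S.ncard := Set.ncard_le_ncard hsub hfin
  have hle' : (((s + 1) ^ 2 + s ^ 2 : ℕ) : ℝ) ≤ (S.ncard : ℝ) := by exact_mod_cast hle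
  refine le_trans ?_ hle'
  have hsr : (r : ℝ) ≤ 2 * s + 1 := by exact_mod_cast hs2
  push_cast
  nlinarith [hsr, sq_nonneg ((r:ℝ) - 2 * s - 1)]
end

section
/- Let Φ : ℝ → ℝ be positive and nondecreasing, and suppose there are constants c₁ > 0 and c₂ with 1 ≤ c₂ < 2 such that Φ(2x) ≤ c₂·Φ(x) for all x > c₁. Then for every c₂' with c₂ < c₂' < 2 there exists T₀ such that the following holds for every integer T ≥ T₀ and every integer i with 2^{i−1} > c₁, Φ(2^{i−1}) < 2^{i−1}, Φ(2^i) < 2^i, and 2^i ≤ √T: setting d_j = ⌊√(T·2^j / Φ(2^j))⌋ for j ∈ {i−1, i}, the number of points u ∈ ℤ² with d_{i−1} < ‖u‖₁ ≤ d_i is at least (2 − c₂')·T·2^i / Φ(2^i). -/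
/-!
The ℓ¹ ball of radius `n` in `ℤ²` has exactly `2n² + 2n + 1` points, so the ring between radii
`a = ⌊√Y⌋` and `b = ⌊√X⌋` has at least `2b² - 2a² ≥ 2(X - 2√X) - 2Y` points. The doubling
condition gives `Y ≤ (c₂/2)·X` for `X = T·2^i/Φ(2^i)` and `Y = T·2^(i-1)/Φ(2^(i-1))`, hence at
least `(2 - c₂)·X - 4√X` points; finally `X ≥ T` because `Φ(2^i) < 2^i`, so `4√X ≤ (c₂' - c₂)·X`
for large `T`.
-/

open Finset

noncomputable def l1Ball (n : ℕ) : Finset (ℤ × ℤ) :=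
  (Icc (-n : ℤ) n ×ˢ Icc (-n : ℤ) n).filter fun u => |u.1| + |u.2| ≤ n

lemma mem_l1Ball {n : ℕ} {u : ℤ × ℤ} : u ∈ l1Ball n ↔ |u.1| + |u.2| ≤ n := by
  simp only [l1Ball, mem_filter, mem_product, mem_Icc, and_iff_right_iff_imp]
  intro h
  grind [abs_le, abs_nonneg]

lemma sum_abs_Icc_neg_self (n : ℕ) : ∑ x ∈ Icc (-n : ℤ) n, |x| = n * (n + 1) := by
  induction n with
  | zero => simp
  | succ n ih =>
    have h : Icc (-(n + 1 : ℕ) : ℤ) (n + 1 : ℕ) =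
        insert (-(n + 1 : ℤ)) (insert (n + 1 : ℤ) (Icc (-n : ℤ) n)) := by
      ext x
      simp only [mem_Icc, mem_insert]
      omega
    rw [h, sum_insert (by simp; omega), sum_insert (by simp), ih, abs_neg,
      abs_of_nonneg (by positivity)]
    push_cast; ring

lemma filter_abs_add_abs_le {n : ℕ} {x : ℤ} (hx : |x| ≤ n) :
    ((Icc (-n : ℤ) n).filter fun y => |x| + |y| ≤ n) = Icc (-(n - |x|)) (n - |x|) := by
  ext y
  simp only [mem_filter, mem_Icc]
  grind [abs_le, abs_nonneg]

lemma card_l1Ball (n : ℕ) : (#(l1Ball n) : ℤ) = 2 * n ^ 2 + 2 * n + 1 := by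
  have hfiber : ∀ x ∈ Icc (-n : ℤ) n,
      (#((Icc (-n : ℤ) n).filter fun y => |x| + |y| ≤ n) : ℤ) = 2 * n + 1 - 2 * |x| := by
    intro x hx
    have hx : |x| ≤ n := abs_le.mpr (mem_Icc.mp hx)
    rw [filter_abs_add_abs_le hx, Int.card_Icc]
    omega
  rw [l1Ball, card_filter, sum_product]
  simp_rw [← card_filter]
  push_cast
  rw [sum_congr rfl hfiber, sum_sub_distrib, ← mul_sum, sum_abs_Icc_neg_self, sum_const,
    Int.card_Icc]
  simp only [nsmul_eq_mul]
  rw [show (n + 1 - -n : ℤ).toNat = 2 * n + 1 by omega]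
  push_cast; ring

def l1Annulus (a b : ℕ) : Set (ℤ × ℤ) := {u | (a : ℤ) < |u.1| + |u.2| ∧ |u.1| + |u.2| ≤ b}

lemma ncard_l1Annulus {a b : ℕ} (hab : a ≤ b) :
    ((l1Annulus a b).ncard : ℤ) =
      2 * (b ^ 2 + b) - 2 * (a ^ 2 + a) := by
  have hsub : l1Ball a ⊆ l1Ball b := fun u hu => by
    rw [mem_l1Ball] at hu ⊢; omega
  have hset : l1Annulus a b = ↑(l1Ball b \ l1Ball a) := by
    ext u
    simp only [l1Annulus, Set.mem_ofPred_eq, coe_sdiff, Set.mem_sdiff, mem_coe, mem_l1Ball]; omega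
  rw [hset, Set.ncard_coe_finset, card_sdiff_of_subset hsub, Nat.cast_sub (card_le_card hsub),
    card_l1Ball, card_l1Ball]
  ring

lemma sub_two_mul_sqrt_le_sq_floor_sqrt {x : ℝ} (hx : 0 ≤ x) :
    x - 2 * √x ≤ (⌊√x⌋₊ : ℝ) ^ 2 := by
  have hs := Real.sq_sqrt hx
  have hlt := Nat.sub_one_lt_floor √x
  rcases le_or_gt 1 √x with h | h
  · nlinarith
  · nlinarith [Real.sqrt_nonneg x]

lemma sq_floor_sqrt_le {x : ℝ} (hx : 0 ≤ x) : (⌊√x⌋₊ : ℝ) ^ 2 ≤ x := by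
  calc (⌊√x⌋₊ : ℝ) ^ 2 ≤ √x ^ 2 := by gcongr; exact Nat.floor_le (Real.sqrt_nonneg x)
    _ = x := Real.sq_sqrt hx

lemma le_ncard_l1Annulus_floor_sqrt {X Y c c' : ℝ} (hY : 0 ≤ Y) (hYX : Y ≤ c / 2 * X)
    (hc : c ≤ 2) (hcc' : c < c') (hX : (4 / (c' - c)) ^ 2 ≤ X) :
    (2 - c') * X ≤ ((l1Annulus ⌊√Y⌋₊ ⌊√X⌋₊).ncard : ℝ) := by
  have hX0 : 0 ≤ X := le_trans (sq_nonneg _) hX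
  have hab : ⌊√Y⌋₊ ≤ ⌊√X⌋₊ := Nat.floor_mono (Real.sqrt_le_sqrt (by nlinarith))
  have hcard := ncard_l1Annulus hab
  have hsqrt : 4 / (c' - c) ≤ √X := Real.le_sqrt_of_sq_le hX
  have h4 : 4 * √X ≤ (c' - c) * X := by
    rw [div_le_iff₀ (by linarith)] at hsqrt
    nlinarith [Real.sq_sqrt hX0, Real.sqrt_nonneg X]
  have hb := sub_two_mul_sqrt_le_sq_floor_sqrt hX0
  have ha := sq_floor_sqrt_le hY
  have habR : (⌊√Y⌋₊ : ℝ) ≤ ⌊√X⌋₊ := by exact_mod_cast hab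
  rw [← Int.cast_natCast, hcard]
  push_cast
  linarith

lemma mul_div_le_half_mul_div_of_doubling {Φ : ℝ → ℝ} {t x c : ℝ} (ht : 0 ≤ t) (hx : 0 < x)
    (hΦx : 0 < Φ x) (hΦ2x : 0 < Φ (2 * x)) (hdbl : Φ (2 * x) ≤ c * Φ x) :
    t * x / Φ x ≤ c / 2 * (t * (2 * x) / Φ (2 * x)) := by
  rw [show c / 2 * (t * (2 * x) / Φ (2 * x)) = t * x * c / Φ (2 * x) by ring,
    div_le_div_iff₀ hΦx hΦ2x]
  calc t * x * Φ (2 * x) ≤ t * x * (c * Φ x) := by gcongr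
    _ = t * x * c * Φ x := by ring

theorem ring_card_relatively_slow_general (Φ : ℝ → ℝ) (hpos : ∀ x : ℝ, 0 < Φ x)
    (c₁ c₂ : ℝ) (hdbl : ∀ x : ℝ, c₁ < x → Φ (2 * x) ≤ c₂ * Φ x)
    (c₂' : ℝ) (hc₂' : c₂ < c₂') (hc₂'2 : c₂' < 2) :
    ∃ T₀ : ℕ, ∀ T : ℕ, T₀ ≤ T → ∀ i : ℕ, 1 ≤ i →
      c₁ < (2 : ℝ) ^ (i - 1) →
      Φ ((2 : ℝ) ^ (i - 1)) < (2 : ℝ) ^ (i - 1) →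
      Φ ((2 : ℝ) ^ i) < (2 : ℝ) ^ i →
      (2 : ℝ) ^ i ≤ Real.sqrt T →
      (2 - c₂') * T * 2 ^ i / Φ ((2 : ℝ) ^ i) ≤
        (Set.ncard {u : ℤ × ℤ |
            (⌊Real.sqrt ((T : ℝ) * 2 ^ (i - 1) / Φ ((2 : ℝ) ^ (i - 1)))⌋₊ : ℤ)
                < |u.1| + |u.2| ∧
            |u.1| + |u.2| ≤
              (⌊Real.sqrt ((T : ℝ) * 2 ^ i / Φ ((2 : ℝ) ^ i))⌋₊ : ℤ)} : ℝ) := by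
  refine ⟨⌈(4 / (c₂' - c₂)) ^ 2⌉₊, fun T hT i hi hc₁i _ hΦi _ => ?_⟩
  have hpow : (2 : ℝ) ^ i = 2 * 2 ^ (i - 1) := by rw [← pow_succ', Nat.sub_add_cancel hi]
  have hT : (4 / (c₂' - c₂)) ^ 2 ≤ T := Nat.ceil_le.mp hT
  have hTX : (T : ℝ) ≤ T * 2 ^ i / Φ (2 ^ i) := by
    rw [le_div_iff₀ (hpos _)]; gcongr
  have hYX := mul_div_le_half_mul_div_of_doubling T.cast_nonneg (by positivity) (hpos _)
    (hpos _) (hdbl _ hc₁i)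
  rw [← hpow] at hYX
  rw [mul_assoc, mul_div_assoc]
  exact le_ncard_l1Annulus_floor_sqrt (div_nonneg (by positivity) (hpos _).le) hYX
    (hc₂'.trans hc₂'2).le hc₂' (hT.trans hTX)

/-- Ring-cardinality estimate for relatively-slow functions (Section 5.2):
if `Φ` is positive, nondecreasing and satisfies the doubling condition
`Φ(2x) ≤ c₂·Φ(x)` for `x > c₁` with `1 ≤ c₂ < 2`, then for every `c₂ < c₂' < 2` there is
`T₀` such that for all integers `T ≥ T₀` and all `i` with `2^(i−1) > c₁`,
`Φ(2^(i−1)) < 2^(i−1)`, `Φ(2^i) < 2^i` and `2^i ≤ √T`, setting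
`d_j = ⌊√(T·2^j/Φ(2^j))⌋`, the ring `{u : d_(i−1) < ‖u‖₁ ≤ d_i}` contains at least
`(2 − c₂')·T·2^i/Φ(2^i)` lattice points. -/
theorem ring_card_relatively_slow (Φ : ℝ → ℝ) (hpos : ∀ x : ℝ, 0 < Φ x)
    (hmono : Monotone Φ) (c₁ c₂ : ℝ) (hc₁ : 0 < c₁) (hc₂₁ : 1 ≤ c₂) (hc₂₂ : c₂ < 2)
    (hdbl : ∀ x : ℝ, c₁ < x → Φ (2 * x) ≤ c₂ * Φ x)
    (c₂' : ℝ) (hc₂' : c₂ < c₂') (hc₂'2 : c₂' < 2) :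
    ∃ T₀ : ℕ, ∀ T : ℕ, T₀ ≤ T → ∀ i : ℕ, 1 ≤ i →
      c₁ < (2 : ℝ) ^ (i - 1) →
      Φ ((2 : ℝ) ^ (i - 1)) < (2 : ℝ) ^ (i - 1) →
      Φ ((2 : ℝ) ^ i) < (2 : ℝ) ^ i →
      (2 : ℝ) ^ i ≤ Real.sqrt T →
      (2 - c₂') * T * 2 ^ i / Φ ((2 : ℝ) ^ i) ≤
        (Set.ncard {u : ℤ × ℤ |
            (⌊Real.sqrt ((T : ℝ) * 2 ^ (i - 1) / Φ ((2 : ℝ) ^ (i - 1)))⌋₊ : ℤ)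
                < |u.1| + |u.2| ∧
            |u.1| + |u.2| ≤
              (⌊Real.sqrt ((T : ℝ) * 2 ^ i / Φ ((2 : ℝ) ^ i))⌋₊ : ℤ)} : ℝ) :=
  ring_card_relatively_slow_general Φ hpos c₁ c₂ hdbl c₂' hc₂' hc₂'2
end

section
/- Let 0 < δ < 1, let D ≥ 1 be an integer, let ζ ∈ ℤ² with ‖ζ‖₁ = D, and let λ be a real with 0 < λ ≤ D/10 and λ·D ≥ 16. Then ∑_{u ∈ ℤ², ‖u−ζ‖₁ ≤ √(λD)/2} 1/‖u‖₁^{2+δ} ≥ λ/(16·D^{1+δ}). -/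
set_option maxHeartbeats 1000000 in
/-- Core estimate of Theorem 5.8 (δ-harmonic search): for `0 < δ < 1`, `‖ζ‖₁ = D ≥ 1`,
`0 < λ ≤ D/10` and `λD ≥ 16`, the sum of `1/‖u‖₁^(2+δ)` over the lattice points `u` with
`‖u − ζ‖₁ ≤ √(λD)/2` is at least `λ/(16·D^(1+δ))`. -/
theorem harmonic_hitting_probability (δ : ℝ) (hδ₁ : 0 < δ) (hδ₂ : δ < 1)
    (D : ℕ) (hD : 1 ≤ D) (ζ : ℤ × ℤ) (hζ : |ζ.1| + |ζ.2| = (D : ℤ))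
    (lam : ℝ) (h₁ : 0 < lam) (h₂ : lam ≤ (D : ℝ) / 10) (h₃ : 16 ≤ lam * D) :
    lam / (16 * (D : ℝ) ^ ((1 : ℝ) + δ)) ≤
      ∑' u : {u : ℤ × ℤ //
          ((|u.1 - ζ.1| + |u.2 - ζ.2| : ℤ) : ℝ) ≤ Real.sqrt (lam * D) / 2},
        1 / ((|u.1.1| + |u.1.2| : ℤ) : ℝ) ^ ((2 : ℝ) + δ) := by
  set r : ℝ := Real.sqrt (lam * D) / 2 with hrdef
  have hDpos : (0:ℝ) < D := by exact_mod_cast hD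
  have hlD : (0:ℝ) ≤ lam * D := by positivity
  have hr0 : 0 ≤ r := by positivity
  have hr2 : r ^ 2 = lam * D / 4 := by
    rw [hrdef, div_pow, Real.sq_sqrt hlD]; norm_num
  have hrge2 : 2 ≤ r := by nlinarith [hr2, hr0, h₃]
  have hrD : r ≤ (D:ℝ)/4 := by nlinarith [hr2, h₂, hDpos, hr0]
  set m : ℕ := ⌊r⌋₊ with hmdef
  have hm1 : r < m + 1 := Nat.lt_floor_add_one r
  have hm0 : (m:ℝ) ≤ r := Nat.floor_le hr0
  have hmD : (m:ℤ) < (D:ℤ) := by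
    have : (m:ℝ) < (D:ℝ) := lt_of_le_of_lt (hm0.trans hrD) (by linarith)
    exact_mod_cast this
  -- the finite set of points
  set φ : ℕ × ℕ → ℤ × ℤ :=
    fun p => (ζ.1 + p.1 + p.2 - m, ζ.2 + p.1 - p.2) with hφ
  have hφinj : Function.Injective φ := by
    rintro ⟨a,b⟩ ⟨c,d⟩ h
    simp only [hφ, Prod.mk.injEq] at h
    obtain ⟨h1, h2⟩ := h
    have : a = c ∧ b = d := by omega
    simp [this.1, this.2]
  set T : Finset (ℕ × ℕ) := Finset.range (m+1) ×ˢ Finset.range (m+1) with hT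
  set S : Finset (ℤ × ℤ) := T.image φ with hS
  have hcard : S.card = (m+1)^2 := by
    rw [hS, Finset.card_image_of_injective _ hφinj, hT, Finset.card_product,
      Finset.card_range]; ring
  -- properties of points of S
  have hSmem : ∀ u ∈ S, |u.1 - ζ.1| + |u.2 - ζ.2| ≤ (m:ℤ) := by
    intro u hu
    rw [hS, Finset.mem_image] at hu
    obtain ⟨p, hp, rfl⟩ := hu
    rw [hT, Finset.mem_product, Finset.mem_range, Finset.mem_range] at hp
    obtain ⟨hp1, hp2⟩ := hp
    simp only [hφ]
    have h1 : (p.1 : ℤ) ≤ m := by exact_mod_cast Nat.lt_succ_iff.mp hp1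
    have h2 : (p.2 : ℤ) ≤ m := by exact_mod_cast Nat.lt_succ_iff.mp hp2
    have h3 : (0:ℤ) ≤ p.1 := Int.natCast_nonneg _
    have h4 : (0:ℤ) ≤ p.2 := Int.natCast_nonneg _
    rcases abs_cases ((ζ.1 + (p.1:ℤ) + p.2 - m) - ζ.1) with ⟨e1, f1⟩ | ⟨e1, f1⟩ <;>
      rcases abs_cases ((ζ.2 + (p.1:ℤ) - p.2) - ζ.2) with ⟨e2, f2⟩ | ⟨e2, f2⟩ <;>
      rw [e1, e2] <;> linarith
  have hP : ∀ u ∈ S, ((|u.1 - ζ.1| + |u.2 - ζ.2| : ℤ) : ℝ) ≤ r := by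
    intro u hu
    have := hSmem u hu
    have : ((|u.1 - ζ.1| + |u.2 - ζ.2| : ℤ) : ℝ) ≤ (m:ℝ) := by exact_mod_cast this
    linarith
  have hnorm : ∀ u ∈ S, (1:ℤ) ≤ |u.1| + |u.2| ∧ |u.1| + |u.2| ≤ (D:ℤ) + m := by
    intro u hu
    have h := hSmem u hu
    constructor
    · have t1 : |ζ.1| ≤ |u.1| + |u.1 - ζ.1| := by
        have := abs_sub_abs_le_abs_sub ζ.1 u.1
        have := abs_sub_comm ζ.1 u.1
        omega
      have t2 : |ζ.2| ≤ |u.2| + |u.2 - ζ.2| := by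
        have := abs_sub_abs_le_abs_sub ζ.2 u.2
        have := abs_sub_comm ζ.2 u.2
        omega
      omega
    · have t1 : |u.1| ≤ |ζ.1| + |u.1 - ζ.1| := by
        have := abs_sub_abs_le_abs_sub u.1 ζ.1
        omega
      have t2 : |u.2| ≤ |ζ.2| + |u.2 - ζ.2| := by
        have := abs_sub_abs_le_abs_sub u.2 ζ.2
        omega
      omega
  -- the function and its summability
  set f : ℤ × ℤ → ℝ := fun u => 1 / ((|u.1| + |u.2| : ℤ) : ℝ) ^ ((2:ℝ) + δ) with hf
  have hf0 : ∀ u, 0 ≤ f u := by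
    intro u
    apply div_nonneg zero_le_one
    apply Real.rpow_nonneg
    positivity
  set P : Set (ℤ × ℤ) := {u | ((|u.1 - ζ.1| + |u.2 - ζ.2| : ℤ) : ℝ) ≤ r} with hPdef
  set B : Finset (ℤ × ℤ) :=
    Finset.Icc (ζ.1 - D) (ζ.1 + D) ×ˢ Finset.Icc (ζ.2 - D) (ζ.2 + D) with hB
  have hout : ∀ u ∉ B, P.indicator f u = 0 := by
    intro u hu
    apply Set.indicator_of_notMem
    rw [hPdef, Set.mem_setOf_eq]
    push_neg
    rw [hB, Finset.mem_product, Finset.mem_Icc, Finset.mem_Icc] at hu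
    have hbig : (D:ℤ) < |u.1 - ζ.1| + |u.2 - ζ.2| := by
      rcases abs_cases (u.1 - ζ.1) with ⟨e1, f1⟩ | ⟨e1, f1⟩ <;>
        rcases abs_cases (u.2 - ζ.2) with ⟨e2, f2⟩ | ⟨e2, f2⟩ <;> omega
    have : (D:ℝ) < ((|u.1 - ζ.1| + |u.2 - ζ.2| : ℤ) : ℝ) := by exact_mod_cast hbig
    linarith
  have hsummable : Summable (P.indicator f) := summable_of_ne_finset_zero hout
  -- per-term lower bound
  have hDrp : (0:ℝ) < (D:ℝ) ^ ((2:ℝ) + δ) := Real.rpow_pos_of_pos hDpos _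
  have key : ∀ u ∈ S, 1 / (2 * (D:ℝ) ^ ((2:ℝ) + δ)) ≤ f u := by
    intro u hu
    obtain ⟨hlo, hhi⟩ := hnorm u hu
    have hx1 : (1:ℝ) ≤ ((|u.1| + |u.2| : ℤ) : ℝ) := by exact_mod_cast hlo
    have hxhi : ((|u.1| + |u.2| : ℤ) : ℝ) ≤ 5 * (D:ℝ) / 4 := by
      have hc : ((|u.1| + |u.2| : ℤ) : ℝ) ≤ (D:ℝ) + m := by exact_mod_cast hhi
      linarith [hm0.trans hrD]
    set x : ℝ := ((|u.1| + |u.2| : ℤ) : ℝ) with hx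
    have hxp : (0:ℝ) < x ^ ((2:ℝ) + δ) := Real.rpow_pos_of_pos (by linarith) _
    have hb1 : x ^ ((2:ℝ) + δ) ≤ (5 * (D:ℝ) / 4) ^ ((2:ℝ) + δ) :=
      Real.rpow_le_rpow (by linarith) hxhi (by linarith)
    have hb2 : (5 * (D:ℝ) / 4) ^ ((2:ℝ) + δ) ≤ 2 * (D:ℝ) ^ ((2:ℝ) + δ) := by
      rw [show (5:ℝ) * D / 4 = (5/4) * D by ring,
        Real.mul_rpow (by norm_num) hDpos.le]
      have e1 : ((5:ℝ)/4) ^ ((2:ℝ) + δ) ≤ ((5:ℝ)/4) ^ ((3:ℝ)) :=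
        Real.rpow_le_rpow_of_exponent_le (by norm_num) (by linarith)
      have e2 : ((5:ℝ)/4) ^ ((3:ℝ)) = ((5:ℝ)/4) ^ (3:ℕ) := by
        rw [← Real.rpow_natCast]; norm_num
      have e3 : ((5:ℝ)/4) ^ (3:ℕ) ≤ 2 := by norm_num
      nlinarith [hDrp]
    rw [hf]
    simp only [← hx]
    apply one_div_le_one_div_of_le hxp
    linarith
  -- assemble
  have hsum_ge : ((m:ℝ)+1)^2 / (2 * (D:ℝ) ^ ((2:ℝ) + δ)) ≤ ∑ u ∈ S, P.indicator f u := by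
    have heq : ∀ u ∈ S, P.indicator f u = f u := by
      intro u hu
      exact Set.indicator_of_mem (show u ∈ P from hP u hu) f
    rw [Finset.sum_congr rfl heq]
    have hstep : (S.card : ℝ) * (1 / (2 * (D:ℝ) ^ ((2:ℝ) + δ))) ≤ ∑ u ∈ S, f u := by
      rw [← nsmul_eq_mul]
      exact Finset.card_nsmul_le_sum S f _ key
    calc ((m:ℝ)+1)^2 / (2 * (D:ℝ) ^ ((2:ℝ) + δ))
        = (S.card : ℝ) * (1 / (2 * (D:ℝ) ^ ((2:ℝ) + δ))) := by
          rw [hcard]; push_cast; ring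
      _ ≤ ∑ u ∈ S, f u := hstep
  have htsum_ge : ((m:ℝ)+1)^2 / (2 * (D:ℝ) ^ ((2:ℝ) + δ)) ≤ ∑' u, P.indicator f u := by
    refine hsum_ge.trans (Summable.sum_le_tsum S (fun u _ => ?_) hsummable)
    exact Set.indicator_nonneg (fun v _ => hf0 v) u
  have hts : ∑' u : {u : ℤ × ℤ //
          ((|u.1 - ζ.1| + |u.2 - ζ.2| : ℤ) : ℝ) ≤ Real.sqrt (lam * D) / 2},
        1 / ((|u.1.1| + |u.1.2| : ℤ) : ℝ) ^ ((2 : ℝ) + δ) = ∑' u, P.indicator f u := by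
    rw [← tsum_subtype P f]
    rfl
  rw [hts]
  refine le_trans ?_ htsum_ge
  -- final arithmetic
  have hE : (0:ℝ) < (D:ℝ) ^ ((1:ℝ) + δ) := Real.rpow_pos_of_pos hDpos _
  have hsplit : (D:ℝ) ^ ((2:ℝ) + δ) = D * (D:ℝ) ^ ((1:ℝ) + δ) := by
    rw [show (2:ℝ) + δ = 1 + (1 + δ) by ring, Real.rpow_add hDpos, Real.rpow_one]
  have hm2 : lam * D / 4 ≤ ((m:ℝ)+1)^2 := by nlinarith [hr2, hm1, hr0]
  rw [hsplit, div_le_div_iff₀ (by positivity) (by positivity)]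
  nlinarith [hm2, hE, h₁, hDpos, mul_pos hE hDpos]
end

section
/- There is a universal constant β > 0 (one may take β = 1/40) such that the following holds. For all integers i ≥ 2 and k with 1 ≤ k ≤ 4^{i−2}, and every ζ ∈ ℤ² with ‖ζ‖₁ ≤ 2^i, setting r = ⌊2^i/√k⌋: the number of points u ∈ ℤ² with ‖u − ζ‖₁ ≤ r and ‖u‖₁ ≤ 2^i is at least (β/k)·|{u ∈ ℤ² : ‖u‖₁ ≤ 2^i}|. -/
/-!
The ball `B_n = {u : ‖u‖₁ ≤ n}` of `ℤ²` has `2n² + 2n + 1` points. Given `ζ ∈ B_n` and `r ≤ n`,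
split `r = s + d` with `s = ⌊r/2⌋ ≤ d`; moving `ζ` a distance `d` towards the origin gives a point
`w` with `‖w‖₁ + d ≤ n`, so `w + B_s` lies in `B(ζ, r) ∩ B_n` and that intersection has at least
`2s² + 2s + 1` points. For `r = ⌊n/√k⌋` we have `n < (r + 1)√k ≤ 2(s + 1)√k`, which leaves
ample room for the constant `1/40`.
-/

open Finset

namespace L1Ball

noncomputable def finset (m : ℕ) : Finset (ℤ × ℤ) :=
  (Icc (-(m : ℤ)) m).biUnion fun x => (Icc (|x| - m) (m - |x|)).image (Prod.mk x)

theorem mem_finset {m : ℕ} {u : ℤ × ℤ} : u ∈ finset m ↔ |u.1| + |u.2| ≤ m := by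
  simp only [finset, mem_biUnion, mem_image, mem_Icc]
  constructor
  · rintro ⟨x, -, y, hy, rfl⟩
    grind
  · intro h
    exact ⟨u.1, by grind, u.2, by grind, rfl⟩

theorem sum_two_mul_sub_abs_add_one (m : ℕ) :
    ∑ x ∈ Icc (-(m : ℤ)) m, (2 * ((m : ℤ) - |x|) + 1) = 2 * m ^ 2 + 2 * m + 1 := by
  induction m with
  | zero => simp
  | succ m ih =>
    have hIcc : Icc (-((m + 1 : ℕ) : ℤ)) ((m + 1 : ℕ) : ℤ)
        = insert (-((m : ℤ) + 1)) (insert ((m : ℤ) + 1) (Icc (-(m : ℤ)) m)) := by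
      ext x; simp only [mem_Icc, mem_insert]; omega
    rw [hIcc, sum_insert (by simp only [mem_insert, mem_Icc]; omega),
      sum_insert (by simp only [mem_Icc]; omega)]
    have hgrow : ∀ x ∈ Icc (-(m : ℤ)) m,
        2 * (((m + 1 : ℕ) : ℤ) - |x|) + 1 = (2 * ((m : ℤ) - |x|) + 1) + 2 := by
      intros; push_cast; ring
    rw [sum_congr rfl hgrow, sum_add_distrib, ih, sum_const, Int.card_Icc,
      abs_neg, abs_of_nonneg (by positivity : (0 : ℤ) ≤ m + 1),
      show ((m : ℤ) + 1 - -m).toNat = 2 * m + 1 by omega]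
    push_cast; ring

theorem card_finset (m : ℕ) : #(finset m) = 2 * m ^ 2 + 2 * m + 1 := by
  rw [finset, card_biUnion]
  · zify
    rw [← sum_two_mul_sub_abs_add_one m]
    refine sum_congr rfl fun x hx => ?_
    rw [card_image_of_injective _ (Prod.mk_right_injective x), Int.card_Icc,
      Int.toNat_of_nonneg (by grind)]
    ring
  · intro x _ y _ hxy
    simp only [Function.onFun, disjoint_left, mem_image]
    rintro _ ⟨_, _, rfl⟩ ⟨_, _, h⟩
    exact hxy (Prod.mk.inj h).1.symm

theorem coe_finset (m : ℕ) : (finset m : Set (ℤ × ℤ)) = {u | |u.1| + |u.2| ≤ (m : ℤ)} := by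
  ext; simp [mem_finset]

theorem ncard_eq (m : ℕ) :
    {u : ℤ × ℤ | |u.1| + |u.2| ≤ (m : ℤ)}.ncard = 2 * m ^ 2 + 2 * m + 1 := by
  rw [← coe_finset, Set.ncard_coe_finset, card_finset]

theorem finite (m : ℕ) : {u : ℤ × ℤ | |u.1| + |u.2| ≤ (m : ℤ)}.Finite := by
  rw [← coe_finset]; exact (finset m).finite_toSet

theorem exists_moved_toward_origin (ζ : ℤ × ℤ) {d n : ℤ} (hd : 0 ≤ d) (hdn : d ≤ n)
    (hζ : |ζ.1| + |ζ.2| ≤ n) :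
    ∃ w : ℤ × ℤ, |ζ.1 - w.1| + |ζ.2 - w.2| ≤ d ∧ |w.1| + |w.2| + d ≤ n := by
  have shrink : ∀ z t : ℤ, 0 ≤ t → ∃ w, |z - w| = min |z| t ∧ |w| = |z| - min |z| t :=
    fun z t ht => ⟨if 0 ≤ z then z - min z t else z + min (-z) t, by grind⟩
  obtain ⟨w₁, h₁, h₁'⟩ := shrink ζ.1 d hd
  obtain ⟨w₂, h₂, h₂'⟩ := shrink ζ.2 (d - min |ζ.1| d) (by omega)
  have := abs_nonneg ζ.2
  exact ⟨(w₁, w₂), by dsimp only; omega, by dsimp only; omega⟩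

theorem le_ncard_inter (ζ : ℤ × ℤ) {n r : ℕ} (hr : r ≤ n) (hζ : |ζ.1| + |ζ.2| ≤ (n : ℤ)) :
    2 * (r / 2) ^ 2 + 2 * (r / 2) + 1 ≤
      {u : ℤ × ℤ | |u.1 - ζ.1| + |u.2 - ζ.2| ≤ (r : ℤ) ∧ |u.1| + |u.2| ≤ (n : ℤ)}.ncard := by
  obtain ⟨w, hζw, hw⟩ :=
    exists_moved_toward_origin ζ (d := (r - r / 2 : ℕ)) (by positivity) (by omega) hζ
  have hsub : (· + w) '' {v : ℤ × ℤ | |v.1| + |v.2| ≤ ((r / 2 : ℕ) : ℤ)} ⊆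
      {u | |u.1 - ζ.1| + |u.2 - ζ.2| ≤ (r : ℤ) ∧ |u.1| + |u.2| ≤ (n : ℤ)} := by
    rintro _ ⟨v, hv, rfl⟩
    simp only [Set.mem_ofPred_eq, Prod.fst_add, Prod.snd_add] at hv ⊢
    have triangle (a b c : ℤ) : |a + b - c| ≤ |a| + |c - b| := by
      rw [add_sub_assoc, abs_sub_comm c]; exact abs_add_le _ _
    have := triangle v.1 w.1 ζ.1
    have := triangle v.2 w.2 ζ.2
    have := abs_add_le v.1 w.1
    have := abs_add_le v.2 w.2
    constructor <;> omega
  calc 2 * (r / 2) ^ 2 + 2 * (r / 2) + 1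
      = ((· + w) '' {v : ℤ × ℤ | |v.1| + |v.2| ≤ ((r / 2 : ℕ) : ℤ)}).ncard := by
        rw [Set.ncard_image_of_injective _ (add_left_injective w), ncard_eq]
    _ ≤ _ := Set.ncard_le_ncard hsub ((finite n).subset fun _ hu => hu.2)

theorem floor_div_sqrt_le_self (n : ℕ) {k : ℕ} (hk : 1 ≤ k) : ⌊(n : ℝ) / √k⌋₊ ≤ n :=
  Nat.floor_le_of_le (div_le_self n.cast_nonneg (Real.one_le_sqrt.mpr (by exact_mod_cast hk)))

theorem sq_lt_floor_div_sqrt_add_one_sq_mul (n : ℕ) {k : ℕ} (hk : 1 ≤ k) :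
    n ^ 2 < (⌊(n : ℝ) / √k⌋₊ + 1) ^ 2 * k := by
  have hsqrt : 0 < √(k : ℝ) := Real.sqrt_pos.mpr (by exact_mod_cast hk)
  have hlt : (n : ℝ) < (⌊(n : ℝ) / √k⌋₊ + 1) * √k := (div_lt_iff₀ hsqrt).mp (Nat.lt_floor_add_one _)
  have hsq := pow_lt_pow_left₀ hlt n.cast_nonneg two_ne_zero
  rw [mul_pow, Real.sq_sqrt k.cast_nonneg] at hsq
  exact_mod_cast hsq

theorem two_mul_sq_add_le_forty_mul {n r k : ℕ} (h : n ^ 2 < (r + 1) ^ 2 * k) :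
    2 * n ^ 2 + 2 * n + 1 ≤ 40 * k * (2 * (r / 2) ^ 2 + 2 * (r / 2) + 1) := by
  have hr : (r + 1) ^ 2 ≤ 4 * (r / 2 + 1) ^ 2 := by
    have : r + 1 ≤ 2 * (r / 2 + 1) := by omega
    nlinarith
  have hn : 2 * n ^ 2 + 2 * n + 1 ≤ 4 * (n ^ 2 + 1) := by nlinarith
  calc 2 * n ^ 2 + 2 * n + 1 ≤ 4 * (n ^ 2 + 1) := hn
    _ ≤ 4 * ((r + 1) ^ 2 * k) := by omega
    _ ≤ 16 * (r / 2 + 1) ^ 2 * k := by nlinarith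
    _ ≤ 40 * k * (2 * (r / 2) ^ 2 + 2 * (r / 2) + 1) := by nlinarith

theorem ncard_inter_ge (n : ℕ) {k : ℕ} (hk : 1 ≤ k) (ζ : ℤ × ℤ) (hζ : |ζ.1| + |ζ.2| ≤ (n : ℤ)) :
    1 / 40 / k * ({u : ℤ × ℤ | |u.1| + |u.2| ≤ (n : ℤ)}.ncard : ℝ) ≤
      ({u : ℤ × ℤ | |u.1 - ζ.1| + |u.2 - ζ.2| ≤ (⌊(n : ℝ) / √k⌋₊ : ℤ) ∧
        |u.1| + |u.2| ≤ (n : ℤ)}.ncard : ℝ) := by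
  have hcount := le_ncard_inter ζ (floor_div_sqrt_le_self n hk) hζ
  have hbound := two_mul_sq_add_le_forty_mul (sq_lt_floor_div_sqrt_add_one_sq_mul n hk)
  rw [ncard_eq, div_div, one_div_mul_eq_div, div_le_iff₀ (by positivity)]
  exact_mod_cast (hbound.trans (Nat.mul_le_mul_left _ hcount)).trans_eq (by ring)

end L1Ball

/-- Probability estimate at the heart of Theorem 3.1: there is a universal constant
`β > 0` (one may take `β = 1/40`) such that for all `i ≥ 2`, `1 ≤ k ≤ 4^(i−2)`, and
`ζ ∈ ℤ²` with `‖ζ‖₁ ≤ 2^i`, setting `r = ⌊2^i/√k⌋`, the number of lattice points `u`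
with `‖u − ζ‖₁ ≤ r` and `‖u‖₁ ≤ 2^i` is at least `(β/k)·|{u : ‖u‖₁ ≤ 2^i}|`. -/
theorem large_phase_success :
    ∃ β : ℝ, 0 < β ∧ β = 1 / 40 ∧
      ∀ (i k : ℕ), 2 ≤ i → 1 ≤ k → k ≤ 4 ^ (i - 2) →
        ∀ ζ : ℤ × ℤ, |ζ.1| + |ζ.2| ≤ (2 : ℤ) ^ i →
          (β / k) * (Set.ncard {u : ℤ × ℤ | |u.1| + |u.2| ≤ (2 : ℤ) ^ i} : ℝ) ≤
            (Set.ncard {u : ℤ × ℤ |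
                |u.1 - ζ.1| + |u.2 - ζ.2| ≤ (⌊(2 : ℝ) ^ i / Real.sqrt k⌋₊ : ℤ) ∧
                |u.1| + |u.2| ≤ (2 : ℤ) ^ i} : ℝ) := by
  refine ⟨1 / 40, by norm_num, rfl, fun i k _ hk _ ζ hζ => ?_⟩
  have hℤ : (2 : ℤ) ^ i = ((2 ^ i : ℕ) : ℤ) := by push_cast; rfl
  have hℝ : (2 : ℝ) ^ i = ((2 ^ i : ℕ) : ℝ) := by push_cast; rfl
  rw [hℤ] at hζ
  rw [hℤ, hℝ]
  exact L1Ball.ncard_inter_ge _ hk ζ hζ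
end
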